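/- arXiv:0802.1815 — 2 statements merged into one kernel-verified Lean document; each statement's English description precedes it below -/
import Mathlib

section
/- Let r be a power of 5 with r ≥ 7. Then for any composition [ω₀, ω₁, ω₂, ω₃, ω₄] of r, there exists a 5-ary constant-composition code C of length r with composition [ω₀, ω₁, ω₂, ω₃, ω₄] whose minimum distance is at least 7 and whose size M satisfies M · r⁴ ≥ r!/(ω₀!·ω₁!·ω₂!·ω₃!·ω₄!). -/
/-!
Identify the positions with the elements of `F = 𝔽_{5^k}` and the symbols with `𝔽₅ ⊆ F`, and sort
the words of composition `ω` by their power-sum syndrome `(∑ᵢ cᵢ xᵢ ^ j)_{j = 1, …, 4} ∈ F⁴`: some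
class contains at least a `1 / r⁴` share of the `multinomial ω` words. For two distinct words
`u`, `v` of one class, `e = u - v` has vanishing power sums of orders `0` (same composition),
`1, …, 4` (same syndrome) and `5` (by Frobenius, since `eᵢ ∈ 𝔽₅`). Hence `∑ᵢ eᵢ P(xᵢ) = 0` for
every `P` of degree at most `5`, and a Lagrange basis polynomial of the support of `e` shows that
this support has at least `7` points.
-/

open Finset Polynomial

theorem card_filter_comp_perm_eq {ι A : Type*} [Fintype ι] [DecidableEq A]
    (c : ι → A) (σ : Equiv.Perm ι) (a : A) : #{i | c (σ i) = a} = #{i | c i = a} := by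
  simp only [← Fintype.card_subtype]
  exact Fintype.card_congr (σ.subtypeEquiv fun _ => Iff.rfl)

theorem card_filter_comp_perm_le_card_stabilizer {ι A : Type*} [Fintype ι] [DecidableEq ι]
    [DecidableEq A] (w c : ι → A) :
    #{σ : Equiv.Perm ι | w ∘ σ = c} ≤ Fintype.card {g : Equiv.Perm ι // w ∘ g = w} := by
  obtain ⟨τ, hτ⟩ | hempty := ({σ : Equiv.Perm ι | w ∘ σ = c} : Finset _).eq_empty_or_nonempty.symm
  · rw [mem_filter] at hτ
    rw [← Fintype.card_subtype]
    refine Fintype.card_le_of_injective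
      (fun σ => ⟨σ.1 * τ⁻¹, funext fun i => ?_⟩) fun σ σ' h => ?_
    · have hσ := congrFun σ.2 (τ⁻¹ i)
      have hτ' := congrFun hτ.2 (τ⁻¹ i)
      simp_all
    · exact Subtype.ext (mul_right_cancel (congrArg Subtype.val h))
  · simp [hempty]

section Composition

variable {ι A : Type*} [Fintype ι] [DecidableEq ι] [Fintype A] [DecidableEq A]

variable (ι) in
def compositionClass (ω : A → ℕ) : Finset (ι → A) :=
  {c | ∀ a, #{i | c i = a} = ω a}

theorem mem_compositionClass {ω : A → ℕ} {c : ι → A} :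
    c ∈ compositionClass ι ω ↔ ∀ a, #{i | c i = a} = ω a := by
  simp [compositionClass]

theorem compositionClass_nonempty {ω : A → ℕ} (hω : ∑ a, ω a = Fintype.card ι) :
    (compositionClass ι ω).Nonempty := by
  let E : ι ≃ Σ a, Fin (ω a) := Fintype.equivOfCardEq (by simp [hω])
  refine ⟨fun i => (E i).1, mem_compositionClass.2 fun a => ?_⟩
  rw [← Fintype.card_subtype, ← Fintype.card_fin (ω a)]
  exact Fintype.card_congr ((E.subtypeEquiv fun _ => Iff.rfl).trans (Equiv.sigmaSubtype a))

theorem multinomial_le_card_compositionClass {ω : A → ℕ} (hω : ∑ a, ω a = Fintype.card ι) :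
    Nat.multinomial univ ω ≤ #(compositionClass ι ω) := by
  obtain ⟨w, hw⟩ := compositionClass_nonempty hω
  rw [mem_compositionClass] at hw
  have hstab : Fintype.card {g : Equiv.Perm ι // w ∘ g = w} = ∏ a, (ω a).factorial := by
    rw [DomMulAct.stabilizer_card]
    simp only [Fintype.card_subtype, hw]
  have hperm : (Fintype.card ι).factorial ≤ #(compositionClass ι ω) * ∏ a, (ω a).factorial := by
    calc (Fintype.card ι).factorial = #(univ : Finset (Equiv.Perm ι)) := by
          rw [card_univ, Fintype.card_perm]
      _ = ∑ c ∈ compositionClass ι ω, #{σ : Equiv.Perm ι | w ∘ σ = c} :=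
          card_eq_sum_card_fiberwise fun σ _ =>
            mem_compositionClass.2 fun a => (card_filter_comp_perm_eq w σ a).trans (hw a)
      _ ≤ ∑ _c ∈ compositionClass ι ω, ∏ a, (ω a).factorial :=
          sum_le_sum fun c _ => hstab ▸ card_filter_comp_perm_le_card_stabilizer w c
      _ = _ := by rw [sum_const, smul_eq_mul]
  have hspec := Nat.multinomial_spec univ ω
  rw [hω] at hspec
  refine Nat.le_of_mul_le_mul_left (c := ∏ a, (ω a).factorial) ?_
    (prod_pos fun a _ => (ω a).factorial_pos)
  rw [hspec, mul_comm]
  exact hperm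

end Composition

theorem Finset.exists_card_le_card_fiber_mul {α β : Type*} [Fintype β] [Nonempty β]
    [DecidableEq β] (s : Finset α) (f : α → β) :
    ∃ y, #s ≤ #{a ∈ s | f a = y} * Fintype.card β := by
  have hβ : (0 : ℚ) < Fintype.card β := by exact_mod_cast Fintype.card_pos
  obtain ⟨y, -, hy⟩ := exists_le_card_fiber_of_nsmul_le_card_of_maps_to (f := f) (t := univ)
    (fun a _ => mem_univ (f a)) univ_nonempty (b := (#s : ℚ) / Fintype.card β)
    (by rw [card_univ, nsmul_eq_mul, mul_div_cancel₀ _ hβ.ne'])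
  refine ⟨y, ?_⟩
  rw [div_le_iff₀ hβ] at hy
  exact_mod_cast hy

theorem Fintype.sum_comp_eq_of_card_fiber_eq {ι A M : Type*} [Fintype ι] [Fintype A]
    [DecidableEq A] [AddCommMonoid M] (f : A → M) {u v : ι → A}
    (h : ∀ a, #{i | u i = a} = #{i | v i = a}) : ∑ i, f (u i) = ∑ i, f (v i) := by
  have hfiber (c : ι → A) : ∑ i, f (c i) = ∑ a, #{i | c i = a} • f a := by
    rw [← Finset.sum_fiberwise univ c]
    refine Finset.sum_congr rfl fun a _ => ?_
    rw [Finset.sum_congr rfl fun i hi => by rw [(mem_filter.1 hi).2], Finset.sum_const]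
  simp only [hfiber, h]

section PowerSums

variable {ι R : Type*} [Fintype ι]

theorem sum_mul_eval_eq_zero_of_sum_mul_pow_eq_zero [CommRing R] {e x : ι → R} {m : ℕ}
    (hmom : ∀ j ≤ m, ∑ i, e i * x i ^ j = 0) {P : R[X]} (hP : P.natDegree ≤ m) :
    ∑ i, e i * P.eval (x i) = 0 := by
  calc ∑ i, e i * P.eval (x i) = ∑ j ∈ range (m + 1), P.coeff j * ∑ i, e i * x i ^ j := by
        simp_rw [eval_eq_sum_range' (Nat.lt_succ_of_le hP), mul_sum]
        rw [sum_comm]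
        exact sum_congr rfl fun j _ => sum_congr rfl fun i _ => by ring
    _ = 0 := sum_eq_zero fun j hj => by
        rw [hmom j (Nat.lt_succ_iff.1 (mem_range.1 hj)), mul_zero]

theorem eq_zero_of_sum_mul_pow_eq_zero [Field R] [DecidableEq R] [DecidableEq ι] {x : ι → R}
    (hx : Function.Injective x) {e : ι → R} {m : ℕ} (hsupp : #{i | e i ≠ 0} ≤ m + 1)
    (hmom : ∀ j ≤ m, ∑ i, e i * x i ^ j = 0) : e = 0 := by
  funext i
  by_contra hi
  set S : Finset ι := {i | e i ≠ 0}
  have hiS : i ∈ S := by simpa [S] using hi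
  have hinj : Set.InjOn x S := hx.injOn
  have hdeg : (Lagrange.basis S x i).natDegree ≤ m := by
    rw [Lagrange.natDegree_basis hinj hiS]
    omega
  have heval : ∑ t, e t * (Lagrange.basis S x i).eval (x t) = e i := by
    rw [← sum_subset (subset_univ S) fun t _ htS => by simp_all [S],
      sum_eq_single_of_mem i hiS fun t htS hti => by
        rw [Lagrange.eval_basis_of_ne (Ne.symm hti) htS, mul_zero],
      Lagrange.eval_basis_self hinj hiS, mul_one]
  exact hi (heval.symm.trans (sum_mul_eval_eq_zero_of_sum_mul_pow_eq_zero hmom hdeg))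

theorem sum_mul_pow_char_of_pow_eq_self [CommRing R] (p : ℕ) [ExpChar R p] {e : ι → R}
    (he : ∀ i, e i ^ p = e i) (x : ι → R) : (∑ i, e i * x i) ^ p = ∑ i, e i * x i ^ p := by
  simp only [sum_pow_char, mul_pow, he]

end PowerSums

section Syndrome

variable {ι A F : Type*} [Fintype ι]

def powerSumSyndrome [CommRing F] (κ : A → F) (x : ι → F) (m : ℕ) (c : ι → A) : Fin m → F :=
  fun j => ∑ i, κ (c i) * x i ^ ((j : ℕ) + 1)

variable [Field F] {p : ℕ} [Fact p.Prime] [CharP F p] {κ : A → F} {x : ι → F}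

theorem sum_sub_mul_pow_eq_zero_of_powerSumSyndrome_eq [Fintype A] [DecidableEq A]
    (hκp : ∀ a, κ a ^ p = κ a) {u v : ι → A} (hcomp : ∀ a, #{i | u i = a} = #{i | v i = a})
    (hsyn : powerSumSyndrome κ x (p - 1) u = powerSumSyndrome κ x (p - 1) v) :
    ∀ j ≤ p, ∑ i, (κ (u i) - κ (v i)) * x i ^ j = 0 := by
  have hsub (j : ℕ) : ∑ i, (κ (u i) - κ (v i)) * x i ^ j
      = ∑ i, κ (u i) * x i ^ j - ∑ i, κ (v i) * x i ^ j := by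
    simp only [sub_mul, sum_sub_distrib]
  have hp := (Fact.out : p.Prime).two_le
  have hmid (j : ℕ) (hj0 : 0 < j) (hjp : j < p) : ∑ i, (κ (u i) - κ (v i)) * x i ^ j = 0 := by
    have := congrFun hsyn ⟨j - 1, by omega⟩
    simp only [powerSumSyndrome, Nat.sub_add_cancel hj0] at this
    rw [hsub, this, sub_self]
  intro j hj
  obtain rfl | hj0 := Nat.eq_zero_or_pos j
  · simp only [pow_zero, mul_one, sum_sub_distrib,
      Fintype.sum_comp_eq_of_card_fiber_eq κ hcomp, sub_self]
  obtain hjp | rfl := hj.lt_or_eq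
  · exact hmid j hj0 hjp
  have hfrob (i : ι) : (κ (u i) - κ (v i)) ^ j = κ (u i) - κ (v i) := by
    rw [sub_pow_char, hκp, hκp]
  have h1 := hmid 1 one_pos hp
  rw [← sum_mul_pow_char_of_pow_eq_self j hfrob]
  simp only [pow_one] at h1
  rw [h1, zero_pow hj0.ne']

theorem add_two_le_hammingDist_of_powerSumSyndrome_eq [Fintype A] [DecidableEq A]
    (hκ : Function.Injective κ) (hκp : ∀ a, κ a ^ p = κ a)
    (hx : Function.Injective x) {u v : ι → A} (hcomp : ∀ a, #{i | u i = a} = #{i | v i = a})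
    (hsyn : powerSumSyndrome κ x (p - 1) u = powerSumSyndrome κ x (p - 1) v) (huv : u ≠ v) :
    p + 2 ≤ hammingDist u v := by
  classical
  by_contra! hlt
  refine huv (funext fun i => hκ (sub_eq_zero.1 (congrFun (eq_zero_of_sum_mul_pow_eq_zero hx
    (e := fun i => κ (u i) - κ (v i)) (m := p) ?_
    (sum_sub_mul_pow_eq_zero_of_powerSumSyndrome_eq hκp hcomp hsyn)) i)))
  have hsupp : #{i | κ (u i) - κ (v i) ≠ 0} = hammingDist u v := by
    simp only [sub_ne_zero, hκ.ne_iff, hammingDist]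
  omega

theorem exists_code_card_mul_le_of_powerSumSyndrome [Fintype F] [Fintype A] [DecidableEq A]
    [DecidableEq ι] (hκ : Function.Injective κ) (hκp : ∀ a, κ a ^ p = κ a)
    (hx : Function.Injective x) (ω : A → ℕ) :
    ∃ C ⊆ compositionClass ι ω, (∀ u ∈ C, ∀ v ∈ C, u ≠ v → p + 2 ≤ hammingDist u v) ∧
      #(compositionClass ι ω) ≤ #C * Fintype.card F ^ (p - 1) := by
  classical
  obtain ⟨y, hy⟩ := (compositionClass ι ω).exists_card_le_card_fiber_mul
    (powerSumSyndrome κ x (p - 1))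
  refine ⟨_, filter_subset _ _, fun u hu v hv huv => ?_, by simpa using hy⟩
  rw [mem_filter, mem_compositionClass] at hu hv
  exact add_two_le_hammingDist_of_powerSumSyndrome_eq hκ hκp hx
    (fun a => (hu.1 a).trans (hv.1 a).symm) (hu.2.trans hv.2.symm) huv

end Syndrome

theorem stmt_5_general (r : ℕ) (hr : ∃ k : ℕ, 0 < k ∧ r = 5 ^ k)
    (ω : Fin 5 → ℕ) (hω : ∑ a, ω a = r) :
    ∃ C : Finset (Fin r → Fin 5),
      (∀ c ∈ C, ∀ a : Fin 5, (Finset.univ.filter (fun i => c i = a)).card = ω a) ∧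
      (∀ u ∈ C, ∀ v ∈ C, u ≠ v → 7 ≤ hammingDist u v) ∧
      Nat.multinomial Finset.univ ω ≤ C.card * r ^ 4 := by
  obtain ⟨k, hk, rfl⟩ := hr
  have : Fact (Nat.Prime 5) := ⟨by norm_num⟩
  let F := GaloisField 5 k
  let : Fintype F := Fintype.ofFinite F
  have hF : Fintype.card F = 5 ^ k := by
    rw [← Nat.card_eq_fintype_card]
    exact GaloisField.card 5 k hk.ne'
  let x : Fin (5 ^ k) ≃ F := Fintype.equivOfCardEq (by simp [hF])
  let κ : Fin 5 → F := fun a => ZMod.castHom dvd_rfl F a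
  obtain ⟨C, hCω, hdist, hcard⟩ := exists_code_card_mul_le_of_powerSumSyndrome (p := 5)
    (κ := κ) (ZMod.castHom dvd_rfl F).injective
    (fun a => (map_pow _ _ _).symm.trans (congrArg _ (ZMod.pow_card (p := 5) a))) x.injective ω
  refine ⟨C, fun c hc => mem_compositionClass.1 (hCω hc), hdist, ?_⟩
  calc Nat.multinomial univ ω ≤ #(compositionClass (Fin (5 ^ k)) ω) :=
        multinomial_le_card_compositionClass (by simpa using hω)
    _ ≤ #C * (5 ^ k) ^ 4 := by simpa [hF] using hcard

/-- Let `r` be a power of `5` with `r ≥ 7`. For any composition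
`[ω₀, ω₁, ω₂, ω₃, ω₄]` of `r`, there is a `5`-ary constant-composition code of length `r`
with composition `ω`, minimum distance at least `7`, and size `M` with
`M · r⁴ ≥ r!/(ω₀!ω₁!ω₂!ω₃!ω₄!)`. -/
theorem stmt_5 (r : ℕ) (hr : ∃ k : ℕ, 0 < k ∧ r = 5 ^ k) (hr7 : 7 ≤ r)
    (ω : Fin 5 → ℕ) (hω : ∑ a, ω a = r) :
    ∃ C : Finset (Fin r → Fin 5),
      (∀ c ∈ C, ∀ a : Fin 5, (Finset.univ.filter (fun i => c i = a)).card = ω a) ∧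
      (∀ u ∈ C, ∀ v ∈ C, u ≠ v → 7 ≤ hammingDist u v) ∧
      Nat.multinomial Finset.univ ω ≤ C.card * r ^ 4 :=
  stmt_5_general r hr ω hω
end

section
/- Let [ω₀, ω₁, ω₂] be a composition of n. If n is odd, there exists a ternary constant-composition code of length n with composition [ω₀, ω₁, ω₂], minimum distance at least 3, and size M satisfying M · n ≥ n!/(ω₀!·ω₁!·ω₂!). If n is even, there exists such a code with size M satisfying M · (n + 1) ≥ n!/(ω₀!·ω₁!·ω₂!). -/
/-!
The permutations of positions act on the words of composition `ω` with stabilizers of order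
`∏ ωₐ!`, so there are at least `n!/∏ ωₐ!` such words. Let `m` be `n` or `n + 1`, whichever is
odd, and keep the most populous fiber of the checksum `c ↦ ∑ i * cᵢ (mod m)`. Two distinct words
of the same composition at distance at most `2` differ by a transposition of two positions
`i ≠ j` with `cᵢ ≠ cⱼ`, which changes the checksum by `(i - j)(cᵢ - cⱼ)`. This is nonzero
mod `m`: `0 < |i - j| < m`, and `cᵢ - cⱼ ∈ {±1, ±2}` is a unit because `m` is odd.
-/

open Finset Equiv
open scoped Nat

section Composition

variable {ι α : Type*} [Fintype ι] [DecidableEq ι] [Fintype α] [DecidableEq α]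

def wordsOfComposition (ω : α → ℕ) : Finset (ι → α) :=
  {c | ∀ a, #{i | c i = a} = ω a}

@[simp]
lemma mem_wordsOfComposition {ω : α → ℕ} {c : ι → α} :
    c ∈ wordsOfComposition ω ↔ ∀ a, #{i | c i = a} = ω a := by
  simp [wordsOfComposition]

omit [DecidableEq ι] [Fintype α] in
lemma card_filter_comp_perm_apply_eq (c : ι → α) (σ : Perm ι) (a : α) :
    #{i | c (σ i) = a} = #{i | c i = a} := by
  simp only [← Fintype.card_subtype]
  exact Fintype.card_congr (σ.subtypeEquiv fun _ => Iff.rfl)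

lemma comp_perm_mem_wordsOfComposition {ω : α → ℕ} {c : ι → α}
    (hc : c ∈ wordsOfComposition ω) (σ : Perm ι) : c ∘ σ ∈ wordsOfComposition ω := by
  rw [mem_wordsOfComposition] at hc ⊢
  intro a
  rw [← hc a]
  exact card_filter_comp_perm_apply_eq c σ a

lemma wordsOfComposition_nonempty {ω : α → ℕ} (hω : ∑ a, ω a = Fintype.card ι) :
    (wordsOfComposition ω : Finset (ι → α)).Nonempty := by
  let e : (Σ a, Fin (ω a)) ≃ ι := Fintype.equivOfCardEq (by simp [hω])
  refine ⟨fun i => (e.symm i).1, ?_⟩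
  simp only [mem_wordsOfComposition, ← Fintype.card_subtype]
  intro a
  have efiber : {i // (e.symm i).1 = a} ≃ Fin (ω a) :=
    (e.symm.subtypeEquiv fun _ => Iff.rfl).trans (sigmaSubtype a)
  rw [Fintype.card_congr efiber, Fintype.card_fin]

lemma card_filter_comp_perm_eq_s9 {c : ι → α} (σ : Perm ι) :
    #{τ : Perm ι | c ∘ τ = c ∘ σ} = ∏ a, (#{i | c i = a})! := by
  have hshift : ∀ τ : Perm ι, c ∘ τ = c ∘ σ ↔ c ∘ (τ * σ⁻¹) = c := by
    intro τ
    constructor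
    · intro h; ext i; simpa using congrFun h (σ⁻¹ i)
    · intro h; ext i; simpa using congrFun h (σ i)
  simp only [hshift, ← Fintype.card_subtype]
  rw [← DomMulAct.stabilizer_card]
  exact Fintype.card_congr ((Equiv.mulRight σ⁻¹).subtypeEquiv fun _ => Iff.rfl)

theorem multinomial_le_card_wordsOfComposition {ω : α → ℕ} (hω : ∑ a, ω a = Fintype.card ι) :
    Nat.multinomial univ ω ≤ #(wordsOfComposition ω : Finset (ι → α)) := by
  obtain ⟨c, hc⟩ := wordsOfComposition_nonempty hω
  have hfiber : ∀ w ∈ univ.image (fun σ : Perm ι => c ∘ σ),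
      #{τ : Perm ι | c ∘ τ = w} ≤ ∏ a, (ω a)! := by
    simp only [mem_image, mem_univ, true_and, forall_exists_index]
    rintro _ σ rfl
    simp only [card_filter_comp_perm_eq_s9, mem_wordsOfComposition.mp hc, le_refl]
  have hle : (Fintype.card ι)! ≤ (∏ a, (ω a)!) * #(wordsOfComposition ω : Finset (ι → α)) :=
    calc (Fintype.card ι)! = #(univ : Finset (Perm ι)) := by simp [Fintype.card_perm]
      _ ≤ (∏ a, (ω a)!) * #(univ.image (fun σ : Perm ι => c ∘ σ)) :=
        card_le_mul_card_image _ _ hfiber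
      _ ≤ _ := by
        gcongr
        intro w hw
        obtain ⟨σ, -, rfl⟩ := mem_image.mp hw
        exact comp_perm_mem_wordsOfComposition hc σ
  rw [← hω, ← Nat.multinomial_spec] at hle
  exact Nat.le_of_mul_le_mul_left hle (prod_pos fun a _ => Nat.factorial_pos _)

end Composition

section Transposition

variable {ι α : Type*} [Fintype ι] [DecidableEq ι] [DecidableEq α]

omit [DecidableEq ι] in
lemma exists_ne_apply_eq_of_card_filter_eq {u v : ι → α}
    (hcomp : ∀ a, #{k | u k = a} = #{k | v k = a}) {i : ι} (hi : u i ≠ v i) :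
    ∃ j, u j ≠ v j ∧ u j = v i := by
  by_contra! h
  have hsub : ({k | u k = v i} : Finset ι) ⊂ ({k | v k = v i} : Finset ι) := by
    refine ssubset_iff_of_subset (fun k hk => ?_) |>.mpr ⟨i, by simp, by simpa using hi⟩
    simp only [mem_filter, mem_univ, true_and] at hk ⊢
    exact (not_not.mp fun hne => h k hne hk).symm.trans hk
  exact (card_lt_card hsub).ne (hcomp (v i))

lemma exists_eq_comp_swap_of_hammingDist_le_two {u v : ι → α}
    (hcomp : ∀ a, #{k | u k = a} = #{k | v k = a}) (huv : u ≠ v)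
    (hdist : hammingDist u v ≤ 2) :
    ∃ i j, i ≠ j ∧ u i ≠ u j ∧ v = u ∘ swap i j := by
  obtain ⟨i, hi⟩ := Function.ne_iff.mp huv
  obtain ⟨j, hj, hji⟩ := exists_ne_apply_eq_of_card_filter_eq hcomp hi
  obtain ⟨k, hk, hkj⟩ := exists_ne_apply_eq_of_card_filter_eq hcomp hj
  have hij : i ≠ j := by rintro rfl; exact hi hji
  have hjk : j ≠ k := by rintro rfl; exact hj hkj
  have hsupp : ∀ l, u l ≠ v l → l = i ∨ l = j := by
    intro l hl
    by_contra! hl'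
    refine hdist.not_gt (two_lt_card.mpr ⟨i, ?_, j, ?_, l, ?_, hij, hl'.1.symm, hl'.2.symm⟩) <;>
      simpa
  have hki : k = i := (hsupp k hk).resolve_right hjk.symm
  subst hki
  refine ⟨k, j, hij, fun h => hi (h.trans hji), funext fun l => ?_⟩
  by_cases hlk : l = k
  · simp [hlk, hji]
  by_cases hlj : l = j
  · simp [hlj, hkj]
  rw [Function.comp_apply, swap_apply_of_ne_of_ne hlk hlj]
  by_contra hne
  exact (hsupp l (Ne.symm hne)).elim hlk hlj

end Transposition

def positionSum (m : ℕ) {n q : ℕ} (c : Fin n → Fin q) : ZMod m :=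
  ∑ i : Fin n, ((i : ℕ) : ZMod m) * ((c i : ℕ) : ZMod m)

lemma positionSum_sub_positionSum_comp_swap (m : ℕ) {n q : ℕ} (c : Fin n → Fin q)
    {i j : Fin n} (hij : i ≠ j) :
    positionSum m c - positionSum m (c ∘ swap i j) =
      (((i : ℕ) : ZMod m) - (j : ℕ)) * (((c i : ℕ) : ZMod m) - (c j : ℕ)) := by
  have hre : positionSum m (c ∘ swap i j) =
      ∑ k, (((swap i j k : Fin n) : ℕ) : ZMod m) * ((c k : ℕ) : ZMod m) := by
    rw [← Equiv.sum_comp (swap i j)]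
    simp [positionSum]
  rw [hre, positionSum, ← sum_sub_distrib, Fintype.sum_eq_add i j hij]
  · simp only [swap_apply_left, swap_apply_right]
    ring
  · intro k ⟨hki, hkj⟩
    rw [swap_apply_of_ne_of_ne hki hkj, sub_self]

lemma natCast_sub_mul_natCast_sub_ne_zero {m : ℕ} (hm : Odd m) {i j : ℕ} (hi : i < m)
    (hj : j < m) (hij : i ≠ j) {a b : Fin 3} (hab : a ≠ b) :
    (((i : ZMod m) - j) * (((a : ℕ) : ZMod m) - (b : ℕ))) ≠ 0 := by
  have htwo : IsUnit (2 : ZMod m) := by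
    exact_mod_cast (ZMod.isUnit_iff_coprime 2 m).mpr (Nat.coprime_two_left.mpr hm)
  have hunit : IsUnit (((a : ℕ) : ZMod m) - (b : ℕ)) := by
    refine isUnit_of_dvd_unit ?_ htwo
    fin_cases a <;> fin_cases b <;> simp at hab ⊢ <;> norm_num
  rw [Ne, hunit.mul_left_eq_zero, sub_eq_zero, ZMod.natCast_eq_natCast_iff',
    Nat.mod_eq_of_lt hi, Nat.mod_eq_of_lt hj]
  exact hij

lemma exists_card_le_card_mul_card_fiber {β γ : Type*} [Fintype γ] [Nonempty γ] [DecidableEq γ]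
    (s : Finset β) (f : β → γ) : ∃ y, #s ≤ Fintype.card γ * #{x ∈ s | f x = y} := by
  have hpos : (0 : ℚ) < Fintype.card γ := by exact_mod_cast Fintype.card_pos
  obtain ⟨y, -, hy⟩ := exists_le_card_fiber_of_nsmul_le_card_of_maps_to
    (fun x _ => mem_univ (f x)) univ_nonempty (b := (#s : ℚ) / Fintype.card γ)
    (by rw [card_univ, nsmul_eq_mul, mul_div_cancel₀ _ hpos.ne'])
  exact ⟨y, by exact_mod_cast (div_le_iff₀' hpos).mp hy⟩

theorem three_le_hammingDist_of_positionSum_eq {m n : ℕ} (hm : Odd m) (hnm : n ≤ m)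
    {u v : Fin n → Fin 3} (hcomp : ∀ a, #{k | u k = a} = #{k | v k = a})
    (hsum : positionSum m u = positionSum m v) (huv : u ≠ v) : 3 ≤ hammingDist u v := by
  by_contra! hlt
  obtain ⟨i, j, hij, hu, rfl⟩ := exists_eq_comp_swap_of_hammingDist_le_two hcomp huv (by omega)
  refine natCast_sub_mul_natCast_sub_ne_zero hm (i.2.trans_le hnm) (j.2.trans_le hnm)
    (Fin.val_ne_of_ne hij) hu ?_
  rw [← positionSum_sub_positionSum_comp_swap m u hij, hsum, sub_self]

/-- Let `[ω₀, ω₁, ω₂]` be a composition of `n`. There is a ternary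
constant-composition code of length `n` with composition `ω` and minimum distance at
least `3` whose size `M` satisfies `M · n ≥ n!/(ω₀!ω₁!ω₂!)` when `n` is odd, and
`M · (n + 1) ≥ n!/(ω₀!ω₁!ω₂!)` when `n` is even. -/
theorem stmt_9 (n : ℕ) (ω : Fin 3 → ℕ) (hω : ∑ a, ω a = n) :
    ∃ C : Finset (Fin n → Fin 3),
      (∀ c ∈ C, ∀ a : Fin 3, (Finset.univ.filter (fun i => c i = a)).card = ω a) ∧
      (∀ u ∈ C, ∀ v ∈ C, u ≠ v → 3 ≤ hammingDist u v) ∧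
      Nat.multinomial Finset.univ ω ≤ C.card * (if Odd n then n else n + 1) := by
  set m := if Odd n then n else n + 1 with hm_def
  have hm : Odd m ∧ n ≤ m := by
    rcases Nat.even_or_odd n with h | h
    · simp [hm_def, Nat.not_odd_iff_even.mpr h, h.add_one]
    · simp [hm_def, h]
  have : NeZero m := ⟨hm.1.pos.ne'⟩
  let W : Finset (Fin n → Fin 3) := wordsOfComposition ω
  obtain ⟨y, hy⟩ := exists_card_le_card_mul_card_fiber W (positionSum m)
  refine ⟨{c ∈ W | positionSum m c = y}, fun c hc => ?_, fun u hu v hv huv => ?_, ?_⟩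
  · exact mem_wordsOfComposition.mp (mem_filter.mp hc).1
  · simp only [W, mem_filter, mem_wordsOfComposition] at hu hv
    exact three_le_hammingDist_of_positionSum_eq hm.1 hm.2
      (fun a => (hu.1 a).trans (hv.1 a).symm) (hu.2.trans hv.2.symm) huv
  · calc Nat.multinomial univ ω ≤ #W :=
          multinomial_le_card_wordsOfComposition (by simpa using hω)
      _ ≤ m * _ := by simpa [ZMod.card] using hy
      _ = _ := mul_comm _ _
end
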